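/- arXiv:2005.13187 — 3 statements merged into one kernel-verified Lean document; each statement's English description precedes it below -/
import Mathlib

section
/- In Causal-PIBT, every deadlock is eventually resolved: if a set of requesting agents forms a deadlock cycle (each agent's head equals the next agent's tail), then after finitely many fair activations at least one agent in the cycle reverts from requesting to contracted, because priority inheritance propagates the maximal priority and the searched set S around the cycle until some requesting agent detects its head in S of its parent. -/
/-!
The maximal priority `p M` is never exceeded, and temporal priorities only grow, so an agent
that has inherited `p M` keeps it. By fairness `p M` therefore travels around the whole cycle,
reaching in particular the predecessor `M - 1` of `M`. Along the way the searched set is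
inherited together with the priority, so every agent carrying `p M` has `head M` in its
searched set; for `M - 1` this is the detection condition at `M`.
-/

theorem Fin.induction_add_one {n : ℕ} [NeZero n] {q : Fin n → Prop} {M : Fin n} (hM : q M)
    (hsucc : ∀ i, q i → q (i + 1)) (i : Fin n) : q i := by
  open Fin.NatCast in
  have hq : ∀ k : ℕ, q (M + k) := by
    intro k
    induction k with
    | zero => simpa using hM
    | succ k ih => simpa [add_assoc] using hsucc _ ih
  simpa using hq (i - M).val

section Inheritance

variable {ι P V : Type*} [LinearOrder P]

def KeepsOrInherits (pred : ι → ι) (ptmp ptmp' : ι → P) (S S' : ι → Set V) (i : ι) : Prop :=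
  ptmp' i = ptmp i ∧ S' i = S i ∨
    ptmp i < ptmp (pred i) ∧ ptmp' i = ptmp (pred i) ∧ S (pred i) ⊆ S' i

def IsInheritanceRun (pred : ι → ι) (ptmp : ℕ → ι → P) (S : ℕ → ι → Set V) : Prop :=
  ∀ t i, KeepsOrInherits pred (ptmp t) (ptmp (t + 1)) (S t) (S (t + 1)) i

namespace IsInheritanceRun

variable {pred : ι → ι} {ptmp : ℕ → ι → P} {S : ℕ → ι → Set V}

theorem monotone_ptmp (h : IsInheritanceRun pred ptmp S) (i : ι) : Monotone (ptmp · i) := by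
  refine monotone_nat_of_le_succ fun t => ?_
  rcases h t i with ⟨hkeep, -⟩ | ⟨hlt, hinh, -⟩
  · exact hkeep.ge
  · exact hinh ▸ hlt.le

theorem ptmp_le (h : IsInheritanceRun pred ptmp S) {m : P} (hm : ∀ i, ptmp 0 i ≤ m) :
    ∀ t i, ptmp t i ≤ m := by
  intro t
  induction t with
  | zero => exact hm
  | succ t ih =>
    intro i
    rcases h t i with ⟨hkeep, -⟩ | ⟨-, hinh, -⟩
    · exact hkeep ▸ ih i
    · exact hinh ▸ ih (pred i)

theorem mem_of_ptmp_eq {m : P} {x : V} (h : IsInheritanceRun pred ptmp S)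
    (hx : ∀ i, ptmp 0 i = m → x ∈ S 0 i) : ∀ t i, ptmp t i = m → x ∈ S t i := by
  intro t
  induction t with
  | zero => exact hx
  | succ t ih =>
    intro i him
    rcases h t i with ⟨hkeep, hS⟩ | ⟨-, hinh, hS⟩
    · exact hS ▸ ih i (hkeep ▸ him)
    · exact hS (ih (pred i) (hinh ▸ him))

end IsInheritanceRun

end Inheritance

section CausalPIBT

variable {n : ℕ} [NeZero n] {P V : Type*} [LinearOrder P]

def ActivationRule (head : Fin n → V) (ptmp : ℕ → Fin n → P) (S : ℕ → Fin n → Set V)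
    (act : ℕ → Fin n) : Prop :=
  ∀ (t : ℕ) (i : Fin n), act t = i →
    (ptmp t (i - 1) > ptmp t i →
      ptmp (t + 1) i = ptmp t (i - 1) ∧ S (t + 1) i = S t (i - 1) ∪ S t i ∪ {head i}) ∧
    (¬ ptmp t (i - 1) > ptmp t i → ptmp (t + 1) i = ptmp t i ∧ S (t + 1) i = S t i)

namespace ActivationRule

variable {head : Fin n → V} {ptmp : ℕ → Fin n → P} {S : ℕ → Fin n → Set V} {act : ℕ → Fin n}

theorem isInheritanceRun (h : ActivationRule head ptmp S act)
    (hframe : ∀ (t : ℕ) (i : Fin n), act t ≠ i →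
        ptmp (t + 1) i = ptmp t i ∧ S (t + 1) i = S t i) :
    IsInheritanceRun (· - 1) ptmp S := by
  intro t i
  by_cases hact : act t = i
  · by_cases hlt : ptmp t (i - 1) > ptmp t i
    · obtain ⟨hinh, hS⟩ := (h t i hact).1 hlt
      exact Or.inr ⟨hlt, hinh, hS ▸ Set.subset_union_left.trans Set.subset_union_left⟩
    · exact Or.inl ((h t i hact).2 hlt)
  · exact Or.inl (hframe t i hact)

theorem pred_le_ptmp_succ (h : ActivationRule head ptmp S act) {t : ℕ} {i : Fin n}
    (hact : act t = i) : ptmp t (i - 1) ≤ ptmp (t + 1) i := by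
  by_cases hlt : ptmp t (i - 1) > ptmp t i
  · exact ((h t i hact).1 hlt).1.ge
  · exact ((h t i hact).2 hlt).1 ▸ not_lt.mp hlt

theorem exists_ptmp_eq_max (h : ActivationRule head ptmp S act)
    (hrun : IsInheritanceRun (· - 1) ptmp S)
    (hfair : ∀ (i : Fin n) (t : ℕ), ∃ t' ≥ t, act t' = i)
    {m : P} (hle : ∀ t i, ptmp t i ≤ m) {M : Fin n} (hM : ptmp 0 M = m) (i : Fin n) :
    ∃ t, ptmp t i = m := by
  refine Fin.induction_add_one (q := fun j => ∃ t, ptmp t j = m) ⟨0, hM⟩ (fun j ⟨t, hj⟩ => ?_) i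
  obtain ⟨t', ht', hact⟩ := hfair (j + 1) t
  have hj' : ptmp t' j = m := le_antisymm (hle t' j) (hj ▸ hrun.monotone_ptmp j ht')
  refine ⟨t' + 1, le_antisymm (hle _ _) ?_⟩
  simpa [hj'] using h.pred_le_ptmp_succ hact

end ActivationRule

end CausalPIBT

theorem causalPIBT_deadlock_recovery_general
    {n : ℕ} [NeZero n] {P V : Type*} [LinearOrder P]
    (p : Fin n → P) (hp : Function.Injective p)
    (tail head : Fin n → V)
    (ptmp : ℕ → Fin n → P) (S : ℕ → Fin n → Set V)
    (act : ℕ → Fin n)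
    (hfair : ∀ (i : Fin n) (t : ℕ), ∃ t' ≥ t, act t' = i)
    (hptmp0 : ∀ i, ptmp 0 i = p i)
    (hS0 : ∀ i, tail i ∈ S 0 i ∧ head i ∈ S 0 i)
    (hstep : ∀ (t : ℕ) (i : Fin n), act t = i →
        (ptmp t (i - 1) > ptmp t i →
          ptmp (t + 1) i = ptmp t (i - 1) ∧
          S (t + 1) i = S t (i - 1) ∪ S t i ∪ {head i}) ∧
        (¬ ptmp t (i - 1) > ptmp t i →
          ptmp (t + 1) i = ptmp t i ∧ S (t + 1) i = S t i))
    (hframe : ∀ (t : ℕ) (i : Fin n), act t ≠ i →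
        ptmp (t + 1) i = ptmp t i ∧ S (t + 1) i = S t i) :
    ∃ (t : ℕ) (i : Fin n), head i ∈ S t (i - 1) := by
  obtain ⟨M, hM⟩ := Finite.exists_max p
  have rule : ActivationRule head ptmp S act := hstep
  have hrun := rule.isInheritanceRun hframe
  have hle := hrun.ptmp_le (m := p M) fun i => hptmp0 i ▸ hM i
  have hhead : ∀ t i, ptmp t i = p M → head M ∈ S t i :=
    hrun.mem_of_ptmp_eq fun i hi => hp (hptmp0 i ▸ hi) ▸ (hS0 i).2
  obtain ⟨t, ht⟩ := rule.exists_ptmp_eq_max hrun hfair hle (hptmp0 M) (M - 1)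
  exact ⟨t, M, hhead t (M - 1) ht⟩

/-- Deadlock-recovery of Causal-PIBT, abstractly: `n` requesting agents form a
deadlock cycle (`head i = tail (i+1)`), each agent `i` has a priority `p i`
(pairwise distinct, hence with a unique maximum), a temporal priority `ptmp`
(initially `p`), and a searched set `S i` containing `tail i` and `head i`.
Whenever an agent `i` is activated while its predecessor `i-1` (the agent
requesting `tail i`) has strictly higher temporal priority, `i` inherits that
priority and the predecessor's searched set (plus `head i`); otherwise nothing
changes, and non-activated agents are unchanged.  Under fairness (every agent is
activated at arbitrarily late times), eventually some agent detects its head in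
the searched set of its predecessor — the condition that makes it revert from
requesting to contracted, so the deadlock cannot persist forever. -/
theorem causalPIBT_deadlock_recovery
    {n : ℕ} [NeZero n] {P V : Type*} [LinearOrder P]
    (p : Fin n → P) (hp : Function.Injective p)
    (tail head : Fin n → V)
    (hcycle : ∀ i : Fin n, head i = tail (i + 1))
    (ptmp : ℕ → Fin n → P) (S : ℕ → Fin n → Set V)
    (act : ℕ → Fin n)
    (hfair : ∀ (i : Fin n) (t : ℕ), ∃ t' ≥ t, act t' = i)
    (hptmp0 : ∀ i, ptmp 0 i = p i)
    (hS0 : ∀ i, tail i ∈ S 0 i ∧ head i ∈ S 0 i)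
    (hstep : ∀ (t : ℕ) (i : Fin n), act t = i →
        (ptmp t (i - 1) > ptmp t i →
          ptmp (t + 1) i = ptmp t (i - 1) ∧
          S (t + 1) i = S t (i - 1) ∪ S t i ∪ {head i}) ∧
        (¬ ptmp t (i - 1) > ptmp t i →
          ptmp (t + 1) i = ptmp t i ∧ S (t + 1) i = S t i))
    (hframe : ∀ (t : ℕ) (i : Fin n), act t ≠ i →
        ptmp (t + 1) i = ptmp t i ∧ S (t + 1) i = S t i) :
    ∃ (t : ℕ) (i : Fin n), head i ∈ S t (i - 1) :=
  causalPIBT_deadlock_recovery_general p hp tail head ptmp S act hfair hptmp0 hS0 hstep hframe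
end

section
/- In a biconnected graph G with strictly fewer agents than nodes, the dominant agent of Causal-PIBT never reverts to contracted: if the dominant agent a_d became contracted, every other agent in its tree T_d would be contracted with empty candidate set, forcing V(T_d) \ {tail(d)} to have no neighbors outside V(T_d); by biconnectivity (removing tail(d) leaves G \ {tail(d)} connected), T_d would then span all of G, contradicting |A| < |V|. -/
/-!
Let `S` be the vertex set of the dominant tree. Every vertex of `S` other than `tail d` has all its
neighbours in `S`, so `S \ {tail d}` is closed under adjacency in `G - tail d`. As `G - tail d` is
connected and `S \ {tail d}` is nonempty, it is all of `G - tail d`, hence `S = V`. But `S` consists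
of agents' tails, so there are at least as many agents as vertices.
-/

namespace SimpleGraph

variable {V : Type*}

theorem Walk.end_mem_of_forall_adj_mem {G : SimpleGraph V} {s : Set V}
    (hs : ∀ x ∈ s, ∀ y, G.Adj x y → y ∈ s) {u v : V} (p : G.Walk u v) (hu : u ∈ s) : v ∈ s := by
  induction p with
  | nil => exact hu
  | cons h _ ih => exact ih (hs _ hu _ h)

theorem Preconnected.eq_univ_of_forall_adj_mem {G : SimpleGraph V} (hG : G.Preconnected)
    {s : Set V} (hs : ∀ x ∈ s, ∀ y, G.Adj x y → y ∈ s) (hne : s.Nonempty) : s = Set.univ := by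
  obtain ⟨u, hu⟩ := hne
  exact Set.eq_univ_of_forall fun v ↦ (hG u v).elim fun p ↦ p.end_mem_of_forall_adj_mem hs hu

theorem eq_univ_of_forall_adj_mem_of_preconnected_deleteVerts {G : SimpleGraph V} {v : V}
    (hG : ((⊤ : G.Subgraph).deleteVerts {v}).coe.Preconnected) {S : Set V} (hv : v ∈ S)
    (hne : (S \ {v}).Nonempty) (hS : ∀ x ∈ S \ {v}, ∀ y, G.Adj x y → y ∈ S) :
    S = Set.univ := by
  set H := ((⊤ : G.Subgraph).deleteVerts {v})
  have hH : {x : H.verts | (x : V) ∈ S} = Set.univ := by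
    refine hG.eq_univ_of_forall_adj_mem (fun x hx y hxy ↦ hS x ⟨hx, ?_⟩ y hxy.2.2) ?_
    · simpa using x.2.2
    · obtain ⟨x, hxS, hxv⟩ := hne
      exact ⟨⟨x, by simpa [H] using hxv⟩, hxS⟩
  refine Set.eq_univ_of_forall fun w ↦ ?_
  by_cases hw : w = v
  · exact hw ▸ hv
  · exact Set.eq_univ_iff_forall.mp hH ⟨w, by simpa [H] using hw⟩

end SimpleGraph

theorem dominant_agent_never_contracted_general
    {V A : Type*} [Fintype V] [Fintype A] (G : SimpleGraph V)
    (hbic : ∀ u : V, ((⊤ : G.Subgraph).deleteVerts {u}).coe.Connected)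
    (hA : Fintype.card A < Fintype.card V)
    (tail : A → V)
    (S : Set V) (hS : S ⊆ Set.range tail)
    (d : A) (hd : tail d ∈ S)
    (hne : (S \ {tail d}).Nonempty)
    (hclosed : ∀ x ∈ S \ {tail d}, ∀ y : V, G.Adj x y → y ∈ S) :
    False := by
  have hSuniv : S = Set.univ :=
    SimpleGraph.eq_univ_of_forall_adj_mem_of_preconnected_deleteVerts (hbic (tail d)).preconnected
      hd hne hclosed
  have hsurj : Function.Surjective tail :=
    Set.range_eq_univ.mp (Set.univ_subset_iff.mp (hSuniv ▸ hS))
  exact (Fintype.card_le_of_surjective tail hsurj).not_gt hA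

/-- In Causal-PIBT on a biconnected graph `G` with strictly fewer agents than
nodes, the dominant agent never reverts to contracted.  If it did, every node of
its dominant tree other than `tail d` would have all of its neighbors inside the
tree's vertex set `S`; since `G` remains connected after deleting `tail d`, `S`
would then span all of `G`, contradicting `|A| < |V|` — hence such a
configuration is impossible. -/
theorem dominant_agent_never_contracted
    {V A : Type*} [Fintype V] [Fintype A] (G : SimpleGraph V)
    (hconn : G.Connected)
    (hbic : ∀ u : V, ((⊤ : G.Subgraph).deleteVerts {u}).coe.Connected)
    (hA : Fintype.card A < Fintype.card V)
    (tail : A → V) (htail : Function.Injective tail)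
    (S : Set V) (hS : S ⊆ Set.range tail)
    (d : A) (hd : tail d ∈ S)
    (hne : (S \ {tail d}).Nonempty)
    (hclosed : ∀ x ∈ S \ {tail d}, ∀ y : V, G.Adj x y → y ∈ S) :
    False :=
  dominant_agent_never_contracted_general G hbic hA tail S hS d hd hne hclosed
end

section
/- In the MCP execution policy, if the MAPF plan is conflict-free (no vertex conflicts and no following conflicts), then the asynchronous execution preserving the plan's temporal dependencies is also conflict-free: at no point during execution do two agents occupy the same node, and no agent enters a node before the agent scheduled to leave it earlier has left. -/
/-! Two occupation intervals of the same node by different agents are disjoint: at equal plan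
times the plan has no vertex conflict, and at different plan times the node dependency makes the
earlier visitor leave before the later one arrives. -/

theorem loc_ne_of_leaves_before_arrival {A V : Type*} {T : ℕ} {loc : A → ℕ → V} {σ : A → ℕ → ℕ}
    (hnode : ∀ (i j : A) (t t' : ℕ), i ≠ j → t < t' → t' ≤ T →
        loc i t = loc j t' → σ i (t + 1) ≤ σ j t')
    {i j : A} {t t' s : ℕ} (hij : i ≠ j) (htt' : t < t') (ht' : t' ≤ T)
    (hi : t < T → s < σ i (t + 1)) (hj : σ j t' ≤ s) :
    loc i t ≠ loc j t' := fun heq =>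
  (hi (htt'.trans_le ht')).not_ge ((hnode i j t t' hij htt' ht' heq).trans hj)

theorem mcp_execution_conflict_free_general
    {A V : Type*} (T : ℕ) (loc : A → ℕ → V) (σ : A → ℕ → ℕ)
    (hvertex : ∀ (i j : A) (t : ℕ), i ≠ j → t ≤ T → loc i t ≠ loc j t)
    (hnode : ∀ (i j : A) (t t' : ℕ), i ≠ j → t < t' → t' ≤ T →
        loc i t = loc j t' → σ i (t + 1) ≤ σ j t') :
    ∀ (i j : A) (t t' s : ℕ), i ≠ j → t ≤ T → t' ≤ T →
      σ i t ≤ s → (t < T → s < σ i (t + 1)) →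
      σ j t' ≤ s → (t' < T → s < σ j (t' + 1)) →
      loc i t ≠ loc j t' := by
  intro i j t t' s hij ht ht' hi_arrived hi_stays hj_arrived hj_stays
  rcases lt_trichotomy t t' with htt' | rfl | ht't
  · exact loc_ne_of_leaves_before_arrival hnode hij htt' ht' hi_stays hj_arrived
  · exact hvertex i j t hij ht
  · exact (loc_ne_of_leaves_before_arrival hnode hij.symm ht't ht hj_stays hi_arrived).symm

/-- MCP execution of a conflict-free MAPF plan is conflict-free.
The plan `loc` (paths up to timestep `T`) has no vertex conflicts and no
following conflicts.  An MCP execution assigns to each event `(i,t)` (the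
arrival of agent `i` at `loc i t`) a real execution time `σ i t`, respecting
internal dependencies (`σ i t < σ i (t+1)`) and node-related dependencies
(an agent leaves a node before the agent scheduled to visit it later enters).
Then at no execution instant do two distinct agents occupy the same node:
agent `i` occupies `loc i t` during `[σ i t, σ i (t+1))` (and forever after
`σ i T` for `t = T`). -/
theorem mcp_execution_conflict_free
    {A V : Type*} (T : ℕ) (loc : A → ℕ → V) (σ : A → ℕ → ℕ)
    (hvertex : ∀ (i j : A) (t : ℕ), i ≠ j → t ≤ T → loc i t ≠ loc j t)
    (hfollow : ∀ (i j : A) (t : ℕ), i ≠ j → t < T → loc i (t + 1) ≠ loc j t)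
    (hinternal : ∀ (i : A) (t : ℕ), t < T → σ i t < σ i (t + 1))
    (hnode : ∀ (i j : A) (t t' : ℕ), i ≠ j → t < t' → t' ≤ T →
        loc i t = loc j t' → σ i (t + 1) ≤ σ j t') :
    ∀ (i j : A) (t t' s : ℕ), i ≠ j → t ≤ T → t' ≤ T →
      σ i t ≤ s → (t < T → s < σ i (t + 1)) →
      σ j t' ≤ s → (t' < T → s < σ j (t' + 1)) →
      loc i t ≠ loc j t' :=
  mcp_execution_conflict_free_general T loc σ hvertex hnode
end
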